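/- For every frame F = (S,R): R is coreflexive (for all x,y, xRy implies x = y) if and only if the LEA-formula ∘p is valid on F. Hence coreflexivity is definable in LEA. -/
import Mathlib

/-- The language LEA of essence and accident. -/
inductive LEAForm : Type
  | atom : ℕ → LEAForm
  | neg : LEAForm → LEAForm
  | and : LEAForm → LEAForm → LEAForm
  | ess : LEAForm → LEAForm

/-- A Kripke model (the frame is (W, R)). -/
structure Model (W : Type) where
  R : W → W → Prop
  V : ℕ → W → Prop

/-- Satisfaction for LEA. -/
def satLEA {W : Type} (M : Model W) : W → LEAForm → Prop
  | w, .atom p => M.V p w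
  | w, .neg φ => ¬ satLEA M w φ
  | w, .and φ ψ => satLEA M w φ ∧ satLEA M w ψ
  | w, .ess φ => satLEA M w φ → ∀ v, M.R w v → satLEA M v φ

/-- Implication, defined as usual. -/
def impF (φ ψ : LEAForm) : LEAForm := .neg (.and φ (.neg ψ))
/-- A frame (S,R) is coreflexive iff ∘p is valid on it:
coreflexivity is definable in LEA. -/
theorem stmt6 (W : Type) [Nonempty W] (R : W → W → Prop) :
    (∀ x y, R x y → x = y) ↔
      (∀ (V : ℕ → W → Prop) (s : W), satLEA ⟨R, V⟩ s (.ess (.atom 0))) := by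
  constructor
  · intro h V s hs v hv
    rw [← h s v hv]; exact hs
  · intro h x y hxy
    have := h (fun _ w => w = x) x rfl y hxy
    exact this.symm
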